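/- Let V be a finite-dimensional complex vector space, F•_y a family of decreasing filtrations satisfying the p-opposedness condition F_y^p ∩ conj(F_y^{-p+1}) = 0 for all p (y > 0). If α ∈ V is nonzero and α ∈ F^p ∩ conj(F^{j-p}) with N^j α = 0, where N is a nilpotent real operator with N F^a ⊆ F^{a-1}, and F_y^• := exp(iyN)F^•, then exp(iyN)α ∈ F_y^p ∩ conj(F_y^{-p+1}), contradicting p-opposedness. Hence F^p ∩ conj(F^{j-p}) ∩ ker N^j = 0 for all p and j ≥ 0. -/

import Mathlib

/-!
Since `N` is nilpotent, `exp(cN)` is a finite sum of powers of `N`, so it commutes with `σ` up to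
conjugating `c`, and horizontality moves every `β ∈ F^a` with `N^j β = 0` into `F^{a-j+1}`.
Write `α ∈ F^p ∩ σ(F^{j-p}) ∩ ker N^j` as `α = σβ` and put `c = iy`: then `exp(-2cN) β ∈ F^{-p+1}`
and `exp(cN) α = σ(exp(-cN) β) = σ(exp(cN) exp(-2cN) β)`, so `exp(cN) α` lies in
`F_y^p ∩ σ(F_y^{-p+1}) = 0`; as `exp(cN)` is invertible, `α = 0`.
-/

open Finset

theorem NormedSpace.exp_eq_sum_range_of_pow_eq_zero (𝕂 : Type*) {𝔸 : Type*} [Field 𝕂]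
    [CharZero 𝕂] [Ring 𝔸] [Algebra 𝕂 𝔸] [TopologicalSpace 𝔸] [IsTopologicalRing 𝔸]
    {x : 𝔸} {m : ℕ} (hx : x ^ m = 0) :
    NormedSpace.exp x = ∑ k ∈ range m, (k.factorial⁻¹ : 𝕂) • x ^ k := by
  rw [NormedSpace.exp_eq_tsum 𝕂]
  refine tsum_eq_sum fun k hk => ?_
  rw [pow_eq_zero_of_le (by simpa using hk) hx, smul_zero]

theorem NormedSpace.exp_smul_mul_exp_smul {𝕂 𝔸 : Type*} [RCLike 𝕂] [NormedRing 𝔸]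
    [NormedAlgebra 𝕂 𝔸] [CompleteSpace 𝔸] (x : 𝔸) (c d : 𝕂) :
    NormedSpace.exp (c • x) * NormedSpace.exp (d • x) = NormedSpace.exp ((c + d) • x) := by
  let : NormedAlgebra ℚ 𝔸 := NormedAlgebra.restrictScalars ℚ 𝕂 𝔸
  rw [add_smul, NormedSpace.exp_add_of_commute ((Commute.refl x).smul_left c |>.smul_right d)]

theorem NormedSpace.exp_smul_injective {𝕂 E : Type*} [RCLike 𝕂] [NormedAddCommGroup E]
    [NormedSpace 𝕂 E] [CompleteSpace E] (T : E →L[𝕂] E) (c : 𝕂) :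
    Function.Injective (NormedSpace.exp (c • T) : E →L[𝕂] E) := by
  have hinv := NormedSpace.exp_smul_mul_exp_smul T (-c) c
  rw [neg_add_cancel, zero_smul, NormedSpace.exp_zero] at hinv
  exact Function.LeftInverse.injective (g := (NormedSpace.exp ((-c) • T) : E →L[𝕂] E))
    fun v => by rw [← mul_apply_eq_comp, hinv, one_apply_eq_self]

theorem Module.End.pow_apply_mem_sub_of_apply_mem_sub_one {R M : Type*} [Ring R]
    [AddCommGroup M] [Module R M] {N : Module.End R M} {F : ℤ → Submodule R M}
    (hhor : ∀ a : ℤ, ∀ v ∈ F a, N v ∈ F (a - 1)) {a : ℤ} {v : M} (hv : v ∈ F a) (k : ℕ) :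
    (N ^ k) v ∈ F (a - k) := by
  induction k with
  | zero => simpa using hv
  | succ k ih =>
    rw [pow_succ', Module.End.mul_apply, Nat.cast_succ, ← sub_sub]
    exact hhor _ _ ih

section NilpotentOperator

variable {𝕂 V : Type*} [RCLike 𝕂] [NormedAddCommGroup V] [NormedSpace 𝕂 V]
  [FiniteDimensional 𝕂 V] {N : V →ₗ[𝕂] V}

theorem LinearMap.toContinuousLinearMap_pow_apply (N : V →ₗ[𝕂] V) (k : ℕ) (v : V) :
    (N.toContinuousLinearMap ^ k) v = (N ^ k) v :=
  congrArg (· v) (map_pow (Module.End.toContinuousLinearMap V) N k).symm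

theorem exp_smul_toContinuousLinearMap_apply (hN : IsNilpotent N) {j : ℕ} {v : V}
    (hv : (N ^ j) v = 0) (c : 𝕂) :
    NormedSpace.exp (c • N.toContinuousLinearMap) v
      = ∑ k ∈ range j, (c ^ k / k.factorial) • (N ^ k) v := by
  obtain ⟨m, hm⟩ := hN
  have hT : (c • N.toContinuousLinearMap) ^ m = 0 := by
    ext w
    rw [smul_pow, smul_apply, LinearMap.toContinuousLinearMap_pow_apply, hm]
    simp
  have hterm (k : ℕ) : ((k.factorial⁻¹ : 𝕂) • (c • N.toContinuousLinearMap) ^ k) v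
      = (c ^ k / k.factorial) • (N ^ k) v := by
    rw [smul_apply, smul_pow, smul_apply, LinearMap.toContinuousLinearMap_pow_apply, smul_smul,
      inv_mul_eq_div]
  have hvanish (k : ℕ) (hk : j ≤ k ∨ m ≤ k) : (c ^ k / k.factorial) • (N ^ k) v = 0 := by
    rcases hk with hk | hk
    · rw [Module.End.pow_map_zero_of_le hk hv, smul_zero]
    · rw [pow_eq_zero_of_le hk hm, LinearMap.zero_apply, smul_zero]
  rw [NormedSpace.exp_eq_sum_range_of_pow_eq_zero 𝕂 hT, _root_.sum_apply]
  simp_rw [hterm]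
  calc _ = ∑ k ∈ range (m + j), (c ^ k / k.factorial) • (N ^ k) v :=
        sum_subset (range_subset_range.2 (Nat.le_add_right m j))
          fun k _ hk => hvanish k (.inr (by simpa using hk))
    _ = _ := (sum_subset (range_subset_range.2 (Nat.le_add_left j m))
          fun k _ hk => hvanish k (.inl (by simpa using hk))).symm

theorem exp_smul_toContinuousLinearMap_apply_mem (hN : IsNilpotent N) {F : ℤ → Submodule 𝕂 V}
    (hF : Antitone F) (hhor : ∀ a : ℤ, ∀ v ∈ F a, N v ∈ F (a - 1)) {a : ℤ} {j : ℕ} {v : V}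
    (hv : v ∈ F a) (hvj : (N ^ j) v = 0) (c : 𝕂) :
    NormedSpace.exp (c • N.toContinuousLinearMap) v ∈ F (a - j + 1) := by
  rw [exp_smul_toContinuousLinearMap_apply hN hvj]
  refine sum_mem fun k hk => Submodule.smul_mem _ _
    (hF ?_ (Module.End.pow_apply_mem_sub_of_apply_mem_sub_one hhor hv k))
  have := mem_range.1 hk
  omega

end NilpotentOperator

section RealStructure

variable {V : Type*} [NormedAddCommGroup V] [NormedSpace ℂ V] [FiniteDimensional ℂ V]
  {σ : V →ₛₗ[starRingEnd ℂ] V} {N : V →ₗ[ℂ] V}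

theorem conj_exp_smul_toContinuousLinearMap_apply (hN : IsNilpotent N)
    (hσN : Function.Commute σ N) (c : ℂ) (v : V) :
    σ (NormedSpace.exp (c • N.toContinuousLinearMap) v)
      = NormedSpace.exp ((starRingEnd ℂ c) • N.toContinuousLinearMap) (σ v) := by
  obtain ⟨m, hm⟩ := hN
  have hmv (w : V) : (N ^ m) w = 0 := by rw [hm, LinearMap.zero_apply]
  rw [exp_smul_toContinuousLinearMap_apply ⟨m, hm⟩ (hmv v),
    exp_smul_toContinuousLinearMap_apply ⟨m, hm⟩ (hmv (σ v)), map_sum]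
  refine sum_congr rfl fun k _ => ?_
  rw [LinearMap.map_smulₛₗ, Module.End.pow_apply, Module.End.pow_apply, hσN.iterate_right k v]
  simp

theorem inf_map_conj_inf_ker_pow_eq_bot (hσ : Function.Involutive σ) (hN : IsNilpotent N)
    (hσN : Function.Commute σ N) {F : ℤ → Submodule ℂ V} (hF : Antitone F)
    (hhor : ∀ a : ℤ, ∀ v ∈ F a, N v ∈ F (a - 1)) {y : ℝ} {p : ℤ}
    (hopp : ((F p).map (NormedSpace.exp
          ((Complex.I * (y : ℂ)) • N.toContinuousLinearMap)).toLinearMap) ⊓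
      (((F (-p + 1)).map (NormedSpace.exp
          ((Complex.I * (y : ℂ)) • N.toContinuousLinearMap)).toLinearMap).map σ) = ⊥)
    (j : ℕ) :
    F p ⊓ ((F ((j : ℤ) - p)).map σ) ⊓ LinearMap.ker (N ^ j) = ⊥ := by
  set c : ℂ := Complex.I * y
  rw [eq_bot_iff]
  rintro _ ⟨⟨hα, β, hβ, rfl⟩, hker⟩
  have hβker : (N ^ j) β = 0 := hσ.injective <| by
    rw [Module.End.pow_apply, hσN.iterate_right j β, ← Module.End.pow_apply, hker, map_zero]
  have hγ := exp_smul_toContinuousLinearMap_apply_mem hN hF hhor hβ hβker (-2 * c)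
  rw [sub_sub_cancel_left] at hγ
  have hEσβ : NormedSpace.exp (c • N.toContinuousLinearMap) (σ β)
      = σ (NormedSpace.exp (c • N.toContinuousLinearMap)
          (NormedSpace.exp ((-2 * c) • N.toContinuousLinearMap) β)) := by
    rw [← mul_apply_eq_comp, NormedSpace.exp_smul_mul_exp_smul,
      conj_exp_smul_toContinuousLinearMap_apply hN hσN]
    congr 3
    simp only [c, map_add, map_mul, map_neg, map_ofNat, Complex.conj_I, Complex.conj_ofReal]
    ring
  have hzero : NormedSpace.exp (c • N.toContinuousLinearMap) (σ β) ∈ (⊥ : Submodule ℂ V) :=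
    hopp ▸ ⟨⟨σ β, hα, rfl⟩, ⟨_, ⟨_, hγ, rfl⟩, hEσβ.symm⟩⟩
  exact NormedSpace.exp_smul_injective _ c (by simpa using hzero)

end RealStructure

/-- Let `V` be a finite-dimensional complex vector space with real
structure `σ`, `N` a real (σ-commuting) nilpotent operator with `N F^a ⊆ F^{a-1}` for a
decreasing filtration `F•`, and suppose each `F_y^• := exp(iyN)F^•` (for `y > 0`)
satisfies the p-opposedness condition `F_y^p ∩ σ(F_y^{-p+1}) = 0`.  Then
`F^p ∩ σ(F^{j-p}) ∩ ker N^j = 0` for all `p` and `j ≥ 0`: a nonzero `α` in that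
intersection would yield `exp(iyN)α ∈ F_y^p ∩ σ(F_y^{-p+1})`, contradicting
p-opposedness. -/
theorem stmt16 {V : Type*} [NormedAddCommGroup V] [NormedSpace ℂ V]
    [FiniteDimensional ℂ V]
    (σ : V →ₛₗ[starRingEnd ℂ] V) (hσ : ∀ v : V, σ (σ v) = v)
    (N : V →ₗ[ℂ] V) (hNnil : IsNilpotent N)
    (hreal : ∀ v : V, σ (N v) = N (σ v))
    (F : ℤ → Submodule ℂ V) (hF : Antitone F)
    (hhor : ∀ a : ℤ, ∀ v ∈ F a, N v ∈ F (a - 1))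
    (hopp : ∀ y : ℝ, 0 < y → ∀ p : ℤ,
      ((F p).map (NormedSpace.exp
          ((Complex.I * (y : ℂ)) • LinearMap.toContinuousLinearMap N)).toLinearMap) ⊓
      (((F (-p + 1)).map (NormedSpace.exp
          ((Complex.I * (y : ℂ)) • LinearMap.toContinuousLinearMap N)).toLinearMap).map σ)
        = ⊥) :
    ∀ (p : ℤ) (j : ℕ),
      F p ⊓ ((F ((j : ℤ) - p)).map σ) ⊓ LinearMap.ker (N ^ j) = ⊥ := fun p =>
  inf_map_conj_inf_ker_pow_eq_bot hσ hNnil hreal hF hhor (hopp 1 one_pos p)
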